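/- Let χ be a Dirichlet character mod k induced by a primitive character χ* mod r. Then r divides k and τ(χ) = μ(k/r)·χ*(k/r)·τ(χ*). -/

import Mathlib

open Complex DirichletCharacter

/-- The Gauss sum of a Dirichlet character χ mod k, τ(χ) = Σ_{h=1}^{k} χ(h)e(h/k). -/
noncomputable def gaussSum' {k : ℕ} (χ : DirichletCharacter ℂ k) : ℂ :=
  ∑ h ∈ Finset.range k, χ (h : ZMod k) * Complex.exp (2 * Real.pi * Complex.I * h / k)

/-!
Writing the condition gcd(h, k) = 1 as Σ_{e ∣ gcd(h, k)} μ(e) turns τ(χ) into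
Σ_{e ∣ k} μ(e) χ*(e) S(k/e), where S(n) = Σ_{m<n} χ*(m) e(m/n). If χ*(e) ≠ 0 then e is
coprime to r, so e divides d = k/r and k/e = r·(d/e). Splitting m = r·b + a and using the
r-periodicity of χ* factors S(r·s) through Σ_{b<s} e(b/s), a full sum of s-th roots of
unity, which vanishes for s ≥ 2. Hence only e = d survives, contributing μ(d) χ*(d) τ(χ*).
-/

open ArithmeticFunction Finset Function
open scoped ArithmeticFunction.Moebius

noncomputable def expSum (f : ℕ → ℂ) (n : ℕ) : ℂ :=
  ∑ m ∈ range n, f m * exp (2 * Real.pi * I * m / n)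

lemma sum_range_exp_eq_zero {s : ℕ} (hs : 2 ≤ s) :
    ∑ b ∈ range s, exp (2 * Real.pi * I * b / s) = 0 := by
  have hζ := Complex.isPrimitiveRoot_exp s (by omega)
  rw [← hζ.geom_sum_eq_zero (by omega)]
  refine sum_congr rfl fun b _ => ?_
  rw [← Complex.exp_nat_mul]
  ring_nf

lemma sum_range_mul {M : Type*} [AddCommMonoid M] (g : ℕ → M) (r s : ℕ) :
    ∑ m ∈ range (r * s), g m = ∑ b ∈ range s, ∑ a ∈ range r, g (r * b + a) := by
  induction s with
  | zero => simp
  | succ s ih => rw [Nat.mul_succ, sum_range_add, ih, sum_range_succ]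

lemma expSum_mul_eq_zero {f : ℕ → ℂ} {r s : ℕ} (hf : Periodic f r) (hs : 2 ≤ s) :
    expSum f (r * s) = 0 := by
  rcases eq_or_ne r 0 with rfl | hr
  · simp [expSum]
  have hsplit : ∀ b a : ℕ, f (r * b + a) * exp (2 * Real.pi * I * ↑(r * b + a) / ↑(r * s)) =
      exp (2 * Real.pi * I * b / s) * (f a * exp (2 * Real.pi * I * a / ↑(r * s))) := by
    intro b a
    have hfa : f (r * b + a) = f a := by simpa [add_comm, mul_comm] using hf.nat_mul b a
    rw [hfa, mul_left_comm, ← Complex.exp_add]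
    congr 2
    have : (r : ℂ) ≠ 0 := by exact_mod_cast hr
    have : (s : ℂ) ≠ 0 := by exact_mod_cast (show s ≠ 0 by omega)
    push_cast
    field_simp
  simp only [expSum, sum_range_mul, hsplit, ← mul_sum, ← sum_mul, sum_range_exp_eq_zero hs,
    zero_mul]

lemma sum_range_mul_filter_dvd {M : Type*} [AddCommMonoid M] (g : ℕ → M) {e : ℕ}
    (he : e ≠ 0) (q : ℕ) : ∑ h ∈ range (e * q) with e ∣ h, g h = ∑ m ∈ range q, g (e * m) := by
  symm
  refine sum_nbij (e * ·) (fun m hm => ?_) (fun m _ n _ h => Nat.eq_of_mul_eq_mul_left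
    (Nat.pos_of_ne_zero he) h) (fun h hh => ?_) fun _ _ => rfl
  · simp only [mem_range, mem_filter] at hm ⊢
    exact ⟨Nat.mul_lt_mul_of_pos_left hm (Nat.pos_of_ne_zero he), dvd_mul_right e m⟩
  · simp only [coe_filter, mem_range, Set.mem_ofPred_eq] at hh
    obtain ⟨hlt, m, rfl⟩ := hh
    exact ⟨m, by simpa using Nat.lt_of_mul_lt_mul_left hlt, rfl⟩

lemma sum_divisors_moebius (n : ℕ) {R : Type*} [Ring R] :
    ∑ e ∈ n.divisors, (μ e : R) = if n = 1 then 1 else 0 := by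
  simp only [← intCoe_apply]
  rw [← coe_mul_zeta_apply, coe_moebius_mul_coe_zeta, one_apply]

lemma sum_range_coprime_eq_sum_divisors_moebius {R : Type*} [Ring R] (g : ℕ → R) (k : ℕ) :
    ∑ h ∈ range k with h.Coprime k, g h =
      ∑ e ∈ k.divisors, (μ e : R) * ∑ m ∈ range (k / e), g (e * m) := by
  have hcoprime : ∀ h, (if h.Coprime k then g h else 0) =
      ∑ e ∈ (h.gcd k).divisors, (μ e : R) * g h := by
    intro h
    rw [← sum_mul, sum_divisors_moebius]
    unfold Nat.Coprime
    split_ifs <;> simp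
  rw [sum_filter]
  simp only [hcoprime]
  rw [sum_comm' (t' := k.divisors) (s' := fun e => {h ∈ range k | e ∣ h})]
  · refine sum_congr rfl fun e he => ?_
    obtain ⟨hek, hk⟩ := Nat.mem_divisors.1 he
    rw [← mul_sum]
    congr 1
    conv_lhs => rw [← Nat.mul_div_cancel' hek]
    exact sum_range_mul_filter_dvd g (ne_zero_of_dvd_ne_zero hk hek) _
  · intro h e
    simp only [mem_range, Nat.mem_divisors, mem_filter, Nat.dvd_gcd_iff]
    constructor
    · rintro ⟨hhk, ⟨heh, hek⟩, -⟩
      exact ⟨⟨hhk, heh⟩, hek, by omega⟩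
    · rintro ⟨⟨hhk, heh⟩, hek, hk⟩
      exact ⟨hhk, ⟨heh, hek⟩, Nat.gcd_ne_zero_right hk⟩

lemma changeLevel_natCast {R : Type*} [CommMonoidWithZero R] {r k : ℕ} (hrk : r ∣ k)
    (χ : DirichletCharacter R r) (h : ℕ) :
    changeLevel hrk χ h = if h.Coprime k then χ h else 0 := by
  split_ifs with hc
  · exact_mod_cast changeLevel_eq_cast_of_dvd' χ hrk (Nat.isCoprime_iff_coprime.2 hc)
  · exact MulChar.map_nonunit _ ((ZMod.isUnit_iff_coprime h k).not.2 hc)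

lemma gaussSum'_changeLevel {r k : ℕ} (hrk : r ∣ k) (χ : DirichletCharacter ℂ r) :
    gaussSum' (changeLevel hrk χ) =
      ∑ e ∈ k.divisors, (μ e : ℂ) * (χ e * expSum (fun m => χ m) (k / e)) := by
  have hterm : ∀ e ∈ k.divisors, ∀ m : ℕ,
      χ ↑(e * m) * exp (2 * Real.pi * I * ↑(e * m) / k) =
        χ e * (χ m * exp (2 * Real.pi * I * m / ↑(k / e))) := by
    intro e he m
    obtain ⟨hek, hk⟩ := Nat.mem_divisors.1 he
    have he0 : (e : ℂ) ≠ 0 := by exact_mod_cast ne_zero_of_dvd_ne_zero hk hek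
    have hk0 : (k : ℂ) ≠ 0 := by exact_mod_cast hk
    rw [Nat.cast_div hek he0, Nat.cast_mul, Nat.cast_mul, map_mul, mul_assoc]
    congr 3
    field_simp
  simp only [gaussSum', changeLevel_natCast, ite_mul, zero_mul, ← sum_filter,
    sum_range_coprime_eq_sum_divisors_moebius]
  refine sum_congr rfl fun e he => ?_
  simp only [expSum, mul_sum, hterm e he]

lemma mul_expSum_div_eq_zero {r d e : ℕ} (χ : DirichletCharacter ℂ r) (he : e ∣ r * d)
    (hd : d ≠ 0) (hed : e ≠ d) : χ e * expSum (fun m => χ m) (r * d / e) = 0 := by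
  by_cases hu : IsUnit (e : ZMod r)
  · obtain ⟨s, rfl⟩ := ((ZMod.isUnit_iff_coprime e r).1 hu).dvd_of_dvd_mul_left he
    have he0 : e ≠ 0 := left_ne_zero_of_mul hd
    have hs : 2 ≤ s := by
      have : s ≠ 1 := by rintro rfl; simp at hed
      have : s ≠ 0 := right_ne_zero_of_mul hd
      omega
    have hχ : Periodic (fun m : ℕ => χ m) r := fun m => by simp
    rw [mul_left_comm r, Nat.mul_div_cancel_left _ (Nat.pos_of_ne_zero he0),
      expSum_mul_eq_zero hχ hs, mul_zero]
  · rw [MulChar.map_nonunit χ hu, zero_mul]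

theorem gaussSum_eq_of_induced_general {r k : ℕ} (hrk : r ∣ k)
    (χstar : DirichletCharacter ℂ r)
    (χ : DirichletCharacter ℂ k) (hind : χ = changeLevel hrk χstar) :
    gaussSum' χ =
      (ArithmeticFunction.moebius (k / r) : ℂ) * χstar ((k / r : ℕ) : ZMod r) *
        gaussSum' χstar := by
  obtain ⟨d, rfl⟩ := hrk
  rcases eq_or_ne (r * d) 0 with hk | hk
  · simp [gaussSum', hk]
  have hr : r ≠ 0 := left_ne_zero_of_mul hk
  have hd : d ≠ 0 := right_ne_zero_of_mul hk
  have hoff : ∀ e ∈ (r * d).divisors, e ≠ d →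
      (μ e : ℂ) * (χstar e * expSum (fun m => χstar m) (r * d / e)) = 0 := fun e he hed => by
    rw [mul_expSum_div_eq_zero χstar (Nat.dvd_of_mem_divisors he) hd hed, mul_zero]
  rw [hind, gaussSum'_changeLevel,
    sum_eq_single_of_mem d (Nat.mem_divisors.2 ⟨dvd_mul_left d r, hk⟩) hoff,
    Nat.mul_div_cancel _ (Nat.pos_of_ne_zero hd),
    Nat.mul_div_cancel_left _ (Nat.pos_of_ne_zero hr), mul_assoc]
  rfl

/-- If χ mod k is induced by the primitive character χ* mod r (so r ∣ k), then
τ(χ) = μ(k/r)·χ*(k/r)·τ(χ*). -/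
theorem gaussSum_eq_of_induced {r k : ℕ} (hrk : r ∣ k)
    (χstar : DirichletCharacter ℂ r) (hprim : χstar.IsPrimitive)
    (χ : DirichletCharacter ℂ k) (hind : χ = changeLevel hrk χstar) :
    gaussSum' χ =
      (ArithmeticFunction.moebius (k / r) : ℂ) * χstar ((k / r : ℕ) : ZMod r) *
        gaussSum' χstar :=
  gaussSum_eq_of_induced_general hrk χstar χ hind
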